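/- For every positive integer n and every \pi \in DPP(n), r(\pi) equals the number of paths of \Phi(\pi) that start at (0, n) plus the total number of east steps at height n among the paths of \Phi(\pi). -/

import Mathlib

/-- The entry of the array at row `r` (0-indexed) and position `p` within that row
(this is the entry in column `r + p`, 0-indexed, i.e. `π_{r+1, r+p+1}` in 1-indexed terms). -/
def entry? (rows : List (List ℕ)) (r p : ℕ) : Option ℕ :=
  rows[r]?.bind fun row => row[p]?

/-- `rows` is a `d`-descending plane partition with all entries ≤ `n`.
Row `i` (1-indexed) has `λ_i - i + 1` entries, so `λ_i = (length of row i) + i - 1`;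
the condition `λ_1 ≥ λ_2 ≥ ⋯ ≥ λ_k ≥ k` is equivalent to the row lengths being
strictly decreasing and all rows being nonempty. -/
def IsDPP (d : ℤ) (n : ℕ) (rows : List (List ℕ)) : Prop :=
  -- all rows nonempty (this is `λ_k ≥ k` for each row)
  (∀ row ∈ rows, row ≠ []) ∧
  -- entries are positive integers, at most n
  (∀ row ∈ rows, ∀ x ∈ row, 0 < x ∧ x ≤ n) ∧
  -- shape condition `λ_1 ≥ λ_2 ≥ ⋯`: row lengths strictly decrease
  rows.Chain' (fun a b => b.length < a.length) ∧
  -- entries weakly decrease along each row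
  (∀ row ∈ rows, row.Chain' (fun x y => y ≤ x)) ∧
  -- entries strictly decrease down each column: the entry at position `p` of a row is in
  -- the same column as the entry at position `p+1` of the preceding row
  rows.Chain' (fun a b => ∀ p x y, b[p]? = some x → a[p + 1]? = some y → x < y) ∧
  -- the first entry of each row is strictly greater than (number of entries in the row) - d
  (∀ row ∈ rows, ∀ x, row.head? = some x → (row.length : ℤ) - d < (x : ℤ)) ∧
  -- the first entry of each non-first row is at most (number of entries in previous row) - d
  rows.Chain' (fun a b => ∀ x, b.head? = some x → (x : ℤ) ≤ (a.length : ℤ) - d)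

/-- The entrywise order on descending plane partitions: `π ≤ σ` iff whenever an
entry of `π` exists, the corresponding entry of `σ` exists and is at least as large. -/
def dppLe (π σ : List (List ℕ)) : Prop :=
  ∀ r p x, entry? π r p = some x → ∃ y, entry? σ r p = some y ∧ x ≤ y

/-- `i(π)`: the total number of entries. -/
def numEntries (rows : List (List ℕ)) : ℕ := (rows.map List.length).sum

/-- `r(π)` (for the bound `n`): the number of entries equal to `n`. -/
def numEqual (n : ℕ) (rows : List (List ℕ)) : ℕ :=
  (rows.map fun row => row.count n).sum

/-- `s(π)`: the number of special entries, i.e. entries `π_{i,j}` with `π_{i,j} ≤ j - i`;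
in 0-indexed terms, the entry at position `p` of a row is special iff it is `≤ p`. -/
def numSpecial (rows : List (List ℕ)) : ℕ :=
  (rows.map fun row =>
    ((Finset.range row.length).filter fun p => row.getD p 0 ≤ p).card).sum

/-- A lattice path, given by its starting point and its list of steps:
`true` is an east step `(1,0)`, `false` is a south step `(0,-1)`. -/
structure LPath where
  start : ℤ × ℤ
  steps : List Bool

/-- The displacement vector of a step. -/
def stepVec (b : Bool) : ℤ × ℤ := if b then (1, 0) else (0, -1)

/-- The list of lattice points visited by a path. -/
def LPath.points (P : LPath) : List (ℤ × ℤ) :=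
  P.steps.scanl (fun p b => p + stepVec b) P.start

/-- The endpoint of a path. -/
def LPath.finish (P : LPath) : ℤ × ℤ :=
  P.steps.foldl (fun p b => p + stepVec b) P.start

/-- The starting points of the east steps of a path (an east step starting at `(x,y)`
has height `y` and right endpoint `(x+1, y)`). -/
def LPath.eastSteps (P : LPath) : List (ℤ × ℤ) :=
  ((P.points.zip P.steps).filter fun q => q.2).map Prod.fst

/-- A family of lattice paths is nonintersecting if no two paths share a lattice point. -/
def Nonintersecting (F : List LPath) : Prop :=
  F.Pairwise fun P Q => ∀ pt ∈ P.points, pt ∉ Q.points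

/-- `L(n)`: families `(P_1, …, P_k)` of pairwise nonintersecting lattice paths such that
for some `n ≥ h_1 > h_2 > ⋯ > h_k ≥ 2`, the path `P_i` runs from `(0, h_i)` to `(h_i - 2, 0)`. -/
def InL (n : ℕ) (F : List LPath) : Prop :=
  (∀ P ∈ F, ∃ h : ℤ, 2 ≤ h ∧ h ≤ (n : ℤ) ∧ P.start = (0, h) ∧ P.finish = (h - 2, 0)) ∧
  F.Chain' (fun P Q => Q.start.2 < P.start.2) ∧
  Nonintersecting F

/-- The steps of a path that starts at height `top` and takes its east steps at the
heights listed in `H` (weakly decreasing), ending at height `0`. -/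
def stepsFromHeights : ℕ → List ℕ → List Bool
  | top, [] => List.replicate top false
  | top, h :: t => List.replicate (top - h) false ++ true :: stepsFromHeights h t

/-- The path associated to a row `π_{i,i}, π_{i,i+1}, …, π_{i,λ_i}` of a descending plane
partition: it starts at `(0, π_{i,i})`, takes its east steps at the heights
`π_{i,i+1}, …, π_{i,λ_i}` in this order, then takes `π_{i,i} - 2 - (λ_i - i)` further east
steps at height `0`, ending at `(π_{i,i} - 2, 0)`. -/
def phiRow (row : List ℕ) : LPath :=
  match row with
  | [] => ⟨(0, 0), []⟩
  | a :: rest =>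
      ⟨((0 : ℤ), (a : ℤ)), stepsFromHeights a (rest ++ List.replicate (a - 2 - rest.length) 0)⟩

/-- The map `Φ` from descending plane partitions to families of lattice paths. -/
def Phi (rows : List (List ℕ)) : List LPath := rows.map phiRow

/-! The path `Φ` attaches to a row `a, π₂, …, π_m` starts at height `a` and, because the row
is weakly decreasing, has its east steps at exactly the heights `π₂, …, π_m` followed by some
zeros. So an entry equal to `n` is either the first entry of its row, seen as a path starting at
`(0, n)`, or a later one, seen as an east step at height `n`; the padding zeros never count
since `n > 0`. Summing over the rows gives the theorem. -/

namespace LPath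

@[simp]
lemma eastSteps_mk_nil (p : ℤ × ℤ) : (mk p []).eastSteps = [] := by
  simp [eastSteps, points]

lemma eastSteps_mk_cons (p : ℤ × ℤ) (b : Bool) (s : List Bool) :
    (mk p (b :: s)).eastSteps = (if b then [p] else []) ++ (mk (p + stepVec b) s).eastSteps := by
  cases b <;> simp [eastSteps, points]

lemma eastSteps_mk_replicate_false_append (x y : ℤ) (k : ℕ) (s : List Bool) :
    (mk (x, y) (List.replicate k false ++ s)).eastSteps = (mk (x, y - k) s).eastSteps := by
  induction k generalizing y with
  | zero => simp
  | succ k ih =>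
    rw [List.replicate_succ, List.cons_append, eastSteps_mk_cons]
    have hsouth : (x, y) + stepVec false = (x, y - 1) := by simp [stepVec, sub_eq_add_neg]
    rw [hsouth, ih]
    simp only [Bool.false_eq_true, if_false, List.nil_append, Nat.cast_succ, sub_add_eq_sub_sub,
      sub_right_comm]

lemma countP_eastSteps_height_eq (P : LPath) (y : ℤ) :
    P.eastSteps.countP (fun pt => decide (pt.2 = y)) = (P.eastSteps.map Prod.snd).count y := by
  rw [List.count_eq_countP, List.countP_map]
  rfl

end LPath

lemma map_snd_eastSteps_stepsFromHeights (x : ℤ) (top : ℕ) (H : List ℕ)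
    (hH : (top :: H).IsChain (fun a b => b ≤ a)) :
    (LPath.mk (x, top) (stepsFromHeights top H)).eastSteps.map Prod.snd = H.map (↑) := by
  induction H generalizing x top with
  | nil => simpa [stepsFromHeights] using LPath.eastSteps_mk_replicate_false_append x top top []
  | cons h t ih =>
    obtain ⟨hle, ht⟩ := List.isChain_cons_cons.1 hH
    rw [stepsFromHeights, LPath.eastSteps_mk_replicate_false_append, LPath.eastSteps_mk_cons,
      Nat.cast_sub hle, sub_sub_cancel]
    simp [stepVec, ih (x + 1) h ht]

lemma count_eq_start_add_eastSteps_phiRow (n : ℕ) (hn : 0 < n) (row : List ℕ)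
    (hrow : row.IsChain (fun x y => y ≤ x)) :
    row.count n = (if (phiRow row).start = ((0 : ℤ), (n : ℤ)) then 1 else 0) +
      (phiRow row).eastSteps.countP (fun pt => decide (pt.2 = (n : ℤ))) := by
  match row, hrow with
  | [], _ => simpa [phiRow] using (Int.natCast_pos.mpr hn).ne
  | a :: rest, hrow =>
    have hpad : (a :: (rest ++ List.replicate (a - 2 - rest.length) 0)).IsChain
        (fun x y => y ≤ x) := by
      rw [← List.cons_append]
      exact hrow.append (List.isChain_replicate_of_rel _ le_rfl)
        fun _ _ _ hy => (List.eq_of_mem_replicate (List.mem_of_mem_head? hy)) ▸ Nat.zero_le _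
    rw [LPath.countP_eastSteps_height_eq, phiRow, map_snd_eastSteps_stepsFromHeights 0 a _ hpad,
      List.count_map_of_injective _ _ Nat.cast_injective]
    simp [List.count_cons, List.count_replicate, hn.ne, add_comm]

/-- For every `π ∈ DPP(n)`, `r(π)` equals the number of paths of `Φ(π)` starting at
`(0, n)` plus the total number of east steps at height `n` among the paths of `Φ(π)`. -/
theorem stmt4 (n : ℕ) (hn : 0 < n) (rows : List (List ℕ)) (h : IsDPP 0 n rows) :
    numEqual n rows =
      ((Phi rows).countP fun P => decide (P.start = ((0 : ℤ), (n : ℤ)))) +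
        ((Phi rows).map fun P => P.eastSteps.countP fun pt => decide (pt.2 = (n : ℤ))).sum := by
  obtain ⟨-, -, -, hdecr, -, -, -⟩ := h
  have hrows := fun row hrow => count_eq_start_add_eastSteps_phiRow n hn row (hdecr row hrow)
  rw [numEqual, List.map_congr_left hrows, List.sum_map_add, Phi, List.map_map]
  simp [List.sum_map_ite, List.countP_eq_length_filter, List.filter_map, Function.comp_def]
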